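/- Let M ≥ 0 and let B be a positive contraction on ℓ_2 with B = P_M B P_M. Suppose that ‖B‖ = 1 and that the adjoint B* has a positive norming vector u ∈ E_M with Supp(u) = {0, …, M}. Then for every ε > 0 there exists δ > 0 such that: for every positive contraction T on ℓ_2, if max_{0 ≤ k, l ≤ M} |⟨e_k, (T − B)e_l⟩| < δ, then max_{0 ≤ k ≤ M} ‖(T − B)* e_k‖ < ε. -/

import Mathlib

/-!
Let `P` be the coordinate projection onto `E_M` and `D = T - B`. The `E_M`-part of `D* e_k` has
coordinates of modulus `|⟨e_k, D e_l⟩|`, so it is small. Outside `E_M` the operator `B` vanishes, so the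
`j`-th coordinate of `D* e_k` is `⟨T e_j, e_k⟩ ≥ 0`, and positivity of `T` and `u` gives
`⟨T e_j, e_k⟩ u_k ≤ (T* u)_j`: the part of `D* e_k` outside `E_M` is at most that of `T* u`
divided by `min_k u_k`. Finally `‖T* u‖ ≤ ‖u‖ = ‖B* u‖ = ‖P B* u‖`, while `P T* u` is close to
`P B* u`, so by Pythagoras `T* u` has little mass outside `E_M`.
-/

open scoped ENNReal

noncomputable section

/-- The Hilbert space `ℓ₂` of square-summable complex sequences. -/
abbrev L2 := lp (fun _ : ℕ => ℂ) 2

/-- A vector of `ℓ₂` is positive if all its coordinates are nonnegative reals. -/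
def PosVec (x : L2) : Prop := ∀ n : ℕ, 0 ≤ (x n).re ∧ (x n).im = 0

/-- The set `𝒫₁(ℓ₂)` of positive contractions on `ℓ₂`. -/
def P1 : Set (L2 →L[ℂ] L2) :=
  {T | (∀ x : L2, PosVec x → PosVec (T x)) ∧ ‖T‖ ≤ 1}

/-- The strong operator topology (pointwise norm-convergence). -/
def sot : TopologicalSpace (L2 →L[ℂ] L2) :=
  TopologicalSpace.induced (fun T => (fun x : L2 => T x)) Pi.topologicalSpace

/-- The weak operator topology (pointwise weak convergence). -/
def wot : TopologicalSpace (L2 →L[ℂ] L2) :=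
  TopologicalSpace.induced
    (fun T => (fun q : L2 × L2 => (inner ℂ q.1 (T q.2) : ℂ)))
    Pi.topologicalSpace

/-- The dual strong operator topology `SOT_*` (pointwise norm-convergence of the adjoints). -/
def sotStar : TopologicalSpace (L2 →L[ℂ] L2) :=
  TopologicalSpace.induced
    (fun T => (fun x : L2 => (ContinuousLinearMap.adjoint T) x))
    Pi.topologicalSpace

/-- The `SOT*` topology, the join of `SOT` and `SOT_*`.  (In the order on
`TopologicalSpace`, `⊓` is the coarsest topology refining both.) -/
def sotSStar : TopologicalSpace (L2 →L[ℂ] L2) := sot ⊓ sotStar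

/-- Restriction of a topology to a subset. -/
def rtop {α : Type*} (s : Set α) (t : TopologicalSpace α) : TopologicalSpace ↥s :=
  t.induced Subtype.val

/-- Two topologies on the same set are similar if they have the same dense sets. -/
def SimilarTop {Y : Type*} (t t' : TopologicalSpace Y) : Prop :=
  ∀ A : Set Y, @Dense Y t A ↔ @Dense Y t' A

/-- The canonical basis vector `e_n` of `ℓ₂`. -/
def e (n : ℕ) : L2 := lp.single 2 n (1 : ℂ)

open scoped InnerProductSpace InnerProduct
open Finset ContinuousLinearMap

namespace L2

theorem e_apply (n j : ℕ) : e n j = if j = n then 1 else 0 := by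
  simp [e, lp.single_apply, Pi.single_apply]

theorem inner_e_left (x : L2) (k : ℕ) : ⟪e k, x⟫_ℂ = x k := by
  simp [e, lp.inner_single_left]

theorem single_eq_smul_e (i : ℕ) (a : ℂ) : lp.single 2 i a = a • e i := by
  rw [e, ← lp.single_smul, smul_eq_mul, mul_one]

theorem adjoint_apply_apply (A : L2 →L[ℂ] L2) (x : L2) (j : ℕ) :
    adjoint A x j = ⟪A (e j), x⟫_ℂ := by
  rw [← inner_e_left, adjoint_inner_right]

theorem norm_adjoint_apply_e_apply (A : L2 →L[ℂ] L2) (j k : ℕ) :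
    ‖adjoint A (e k) j‖ = ‖A (e j) k‖ := by
  rw [adjoint_apply_apply, norm_inner_symm, inner_e_left]

/-- `proj (Iic N)` is the coordinate projection `P_N` onto `E_N`. -/
def proj (s : Finset ℕ) : L2 →ₗ[ℂ] L2 where
  toFun x := ∑ i ∈ s, x i • e i
  map_add' x y := by simp [add_smul, sum_add_distrib]
  map_smul' c x := by simp [mul_smul, smul_sum]

variable (s : Finset ℕ)

theorem proj_apply (x : L2) (j : ℕ) : proj s x j = if j ∈ s then x j else 0 := by
  change (∑ i ∈ s, x i • e i : L2) j = _
  rw [lp.coeFn_sum, Finset.sum_apply]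
  simp [e_apply]

theorem proj_eq_sum_single (x : L2) : proj s x = ∑ i ∈ s, lp.single 2 i (x i) := by
  simp [proj, single_eq_smul_e]

theorem proj_eq_self {x : L2} (hx : ∀ j ∉ s, x j = 0) : proj s x = x := by
  ext j
  by_cases hj : j ∈ s <;> simp [proj_apply, hj, hx]

theorem proj_proj (x : L2) : proj s (proj s x) = proj s x :=
  proj_eq_self s fun j hj => by simp [proj_apply, hj]

theorem sub_proj_apply (x : L2) (j : ℕ) :
    (x - proj s x) j = if j ∈ s then 0 else x j := by
  by_cases hj : j ∈ s <;> simp [proj_apply, hj]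

theorem norm_sub_proj_sq (x : L2) :
    ‖x - proj s x‖ ^ 2 = ‖x‖ ^ 2 - ∑ i ∈ s, ‖x i‖ ^ 2 := by
  have h := lp.norm_compl_sum_single (p := 2) (by norm_num) x s
  simpa [← proj_eq_sum_single] using h

theorem norm_proj_sq (x : L2) : ‖proj s x‖ ^ 2 = ∑ i ∈ s, ‖x i‖ ^ 2 := by
  have h := norm_sub_proj_sq s (proj s x)
  rw [proj_proj, sub_self, norm_zero] at h
  have hcoord : ∀ i ∈ s, proj s x i = x i := fun i hi => by simp [proj_apply, hi]
  rw [sum_congr rfl fun i hi => by rw [hcoord i hi]] at h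
  linarith

theorem norm_sq_eq_norm_proj_sq_add (x : L2) :
    ‖x‖ ^ 2 = ‖proj s x‖ ^ 2 + ‖x - proj s x‖ ^ 2 := by
  rw [norm_proj_sq, norm_sub_proj_sq]
  ring

theorem norm_proj_le (x : L2) : ‖proj s x‖ ≤ ‖x‖ := by
  have := norm_sq_eq_norm_proj_sq_add s x
  nlinarith [norm_nonneg (proj s x), norm_nonneg x, sq_nonneg ‖x - proj s x‖]

theorem norm_proj_le_sum (x : L2) : ‖proj s x‖ ≤ ∑ i ∈ s, ‖x i‖ := by
  refine (norm_sum_le _ _).trans (sum_le_sum fun i _ => ?_)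
  rw [norm_smul, e, lp.norm_single (by norm_num), norm_one, mul_one]

theorem norm_sub_proj_le_mul {x y : L2} {c : ℝ} (hc : 0 ≤ c)
    (h : ∀ j ∉ s, ‖x j‖ ≤ c * ‖y j‖) : ‖x - proj s x‖ ≤ c * ‖y - proj s y‖ := by
  rw [← Real.norm_of_nonneg hc, ← norm_smul]
  refine lp.norm_mono (by norm_num) fun j => ?_
  by_cases hj : j ∈ s
  · simp [sub_proj_apply, hj]
  · rw [lp.coeFn_smul, Pi.smul_apply, norm_smul, Real.norm_of_nonneg hc, sub_proj_apply,
      sub_proj_apply, if_neg hj, if_neg hj]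
    exact h j hj

theorem norm_sub_proj_sq_le {x y : L2} (h : ‖y‖ ≤ ‖proj s x‖) :
    ‖y - proj s y‖ ^ 2 ≤ 2 * ‖proj s x‖ * ‖proj s (y - x)‖ := by
  set r := ‖proj s x‖
  have hPy : ‖proj s y‖ ≤ r := (norm_proj_le s y).trans h
  have hdiff : r - ‖proj s y‖ ≤ ‖proj s (y - x)‖ := by
    rw [map_sub, norm_sub_rev]; exact norm_sub_norm_le _ _
  calc ‖y - proj s y‖ ^ 2 = ‖y‖ ^ 2 - ‖proj s y‖ ^ 2 := by
        rw [norm_sq_eq_norm_proj_sq_add s y]; ring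
    _ ≤ (r - ‖proj s y‖) * (r + ‖proj s y‖) := by nlinarith [norm_nonneg y]
    _ ≤ ‖proj s (y - x)‖ * (2 * r) := by
        gcongr
        linarith
    _ = 2 * r * ‖proj s (y - x)‖ := by ring

end L2

theorem PosVec.norm_apply {x : L2} (hx : PosVec x) (j : ℕ) : ‖x j‖ = (x j).re :=
  (Complex.re_eq_norm.2 ⟨(hx j).1, (hx j).2.symm⟩).symm

theorem posVec_e (n : ℕ) : PosVec (e n) := fun j => by
  rw [L2.e_apply]; split_ifs <;> simp

theorem PosVec.norm_mul_norm_le_norm_inner {x y : L2} (hx : PosVec x) (hy : PosVec y) (k : ℕ) :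
    ‖x k‖ * ‖y k‖ ≤ ‖⟪x, y⟫_ℂ‖ := by
  have hsum : HasSum (fun i => (x i).re * (y i).re) (⟪x, y⟫_ℂ).re := by
    simpa [(hx _).2, mul_comm] using (lp.hasSum_inner x y).mapL Complex.reCLM
  calc ‖x k‖ * ‖y k‖ = (x k).re * (y k).re := by rw [hx.norm_apply, hy.norm_apply]
    _ ≤ (⟪x, y⟫_ℂ).re := le_hasSum hsum k fun i _ => mul_nonneg (hx i).1 (hy i).1
    _ ≤ ‖⟪x, y⟫_ℂ‖ := Complex.re_le_norm _

namespace L2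

variable (s : Finset ℕ)

theorem norm_apply_e_apply_mul_le_norm_adjoint_apply {T : L2 →L[ℂ] L2}
    (hT : ∀ x, PosVec x → PosVec (T x)) {u : L2} (hu : PosVec u) (j k : ℕ) :
    ‖T (e j) k‖ * ‖u k‖ ≤ ‖adjoint T u j‖ := by
  rw [adjoint_apply_apply]
  exact (hT _ (posVec_e j)).norm_mul_norm_le_norm_inner hu k

theorem norm_proj_adjoint_e_le {D : L2 →L[ℂ] L2} {δ : ℝ}
    (hD : ∀ k ∈ s, ∀ l ∈ s, ‖⟪e k, D (e l)⟫_ℂ‖ ≤ δ) {k : ℕ} (hk : k ∈ s) :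
    ‖proj s (adjoint D (e k))‖ ≤ #s * δ :=
  calc ‖proj s (adjoint D (e k))‖ ≤ ∑ j ∈ s, ‖adjoint D (e k) j‖ := norm_proj_le_sum s _
    _ ≤ ∑ _j ∈ s, δ := sum_le_sum fun j hj => by
        rw [norm_adjoint_apply_e_apply, ← inner_e_left]
        exact hD k hk j hj
    _ = #s * δ := by rw [sum_const, nsmul_eq_mul]

theorem norm_proj_adjoint_le {D : L2 →L[ℂ] L2} {δ : ℝ}
    (hD : ∀ k ∈ s, ∀ l ∈ s, ‖⟪e k, D (e l)⟫_ℂ‖ ≤ δ) {u : L2} (hu : ∀ j ∉ s, u j = 0) :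
    ‖proj s (adjoint D u)‖ ≤ (∑ i ∈ s, ‖u i‖) * (#s * δ) := by
  have hexpand : proj s (adjoint D u) = ∑ i ∈ s, u i • proj s (adjoint D (e i)) := by
    conv_lhs => rw [← proj_eq_self s hu]
    simp [proj, map_sum, map_smul]
  rw [hexpand, sum_mul]
  refine (norm_sum_le _ _).trans (sum_le_sum fun i hi => ?_)
  rw [norm_smul]
  exact mul_le_mul_of_nonneg_left (norm_proj_adjoint_e_le s hD hi) (norm_nonneg _)

theorem norm_sub_proj_adjoint_sq_le {T B : L2 →L[ℂ] L2} (hT : ‖T‖ ≤ 1)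
    (hB : ∀ j ∉ s, B (e j) = 0) {u : L2} (hBu : ‖adjoint B u‖ = ‖u‖) :
    ‖adjoint T u - proj s (adjoint T u)‖ ^ 2 ≤ 2 * ‖u‖ * ‖proj s (adjoint (T - B) u)‖ := by
  have hBu_supp : ∀ j ∉ s, adjoint B u j = 0 := fun j hj => by
    rw [adjoint_apply_apply, hB j hj, inner_zero_left]
  have hPBu : ‖proj s (adjoint B u)‖ = ‖u‖ := by rw [proj_eq_self s hBu_supp, hBu]
  have hTu : ‖adjoint T u‖ ≤ ‖proj s (adjoint B u)‖ :=
    calc ‖adjoint T u‖ ≤ ‖adjoint T‖ * ‖u‖ := le_opNorm _ _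
      _ ≤ ‖u‖ := by rw [adjoint.norm_map]; exact mul_le_of_le_one_left (norm_nonneg _) hT
      _ = _ := hPBu.symm
  rw [← hPBu, map_sub, _root_.sub_apply]
  exact norm_sub_proj_sq_le s hTu

theorem norm_sub_proj_adjoint_e_le {T B : L2 →L[ℂ] L2} (hT : ∀ x, PosVec x → PosVec (T x))
    (hB : ∀ j ∉ s, B (e j) = 0) {u : L2} (hu : PosVec u) {k : ℕ} {m : ℝ} (hm : 0 < m)
    (hmk : m ≤ ‖u k‖) :
    ‖adjoint (T - B) (e k) - proj s (adjoint (T - B) (e k))‖ ≤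
      m⁻¹ * ‖adjoint T u - proj s (adjoint T u)‖ := by
  refine norm_sub_proj_le_mul s (inv_nonneg.2 hm.le) fun j hj => ?_
  rw [norm_adjoint_apply_e_apply, _root_.sub_apply, hB j hj, sub_zero,
    le_inv_mul_iff₀ hm]
  calc m * ‖T (e j) k‖ ≤ ‖T (e j) k‖ * ‖u k‖ := by rw [mul_comm]; gcongr
    _ ≤ ‖adjoint T u j‖ := norm_apply_e_apply_mul_le_norm_adjoint_apply hT hu j k

theorem norm_adjoint_sub_e_sq_le {T B : L2 →L[ℂ] L2} (hT : T ∈ P1)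
    (hB : ∀ j ∉ s, B (e j) = 0) {u : L2} (hBu : ‖adjoint B u‖ = ‖u‖) (hu : PosVec u)
    (hu_supp : ∀ j ∉ s, u j = 0) {m : ℝ} (hm : 0 < m) (hmu : ∀ k ∈ s, m ≤ ‖u k‖) {δ : ℝ}
    (hTB : ∀ k ∈ s, ∀ l ∈ s, ‖⟪e k, (T - B) (e l)⟫_ℂ‖ ≤ δ) {k : ℕ} (hk : k ∈ s) :
    ‖adjoint (T - B) (e k)‖ ^ 2 ≤
      (#s : ℝ) ^ 2 * δ ^ 2 + 2 * ‖u‖ * (∑ i ∈ s, ‖u i‖) * #s / m ^ 2 * δ := by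
  set x := adjoint (T - B) (e k)
  set y := adjoint T u
  have hhead : ‖proj s x‖ ≤ #s * δ := norm_proj_adjoint_e_le s hTB hk
  have htail : ‖x - proj s x‖ ≤ m⁻¹ * ‖y - proj s y‖ :=
    norm_sub_proj_adjoint_e_le s hT.1 hB hu hm (hmu k hk)
  have htail_y : ‖y - proj s y‖ ^ 2 ≤ 2 * ‖u‖ * ((∑ i ∈ s, ‖u i‖) * (#s * δ)) :=
    (norm_sub_proj_adjoint_sq_le s hT.2 hB hBu).trans <| by
      gcongr; exact norm_proj_adjoint_le s hTB hu_supp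
  calc ‖x‖ ^ 2 = ‖proj s x‖ ^ 2 + ‖x - proj s x‖ ^ 2 := norm_sq_eq_norm_proj_sq_add s x
    _ ≤ (#s * δ) ^ 2 + (m⁻¹ * ‖y - proj s y‖) ^ 2 := by gcongr
    _ = (#s * δ) ^ 2 + ‖y - proj s y‖ ^ 2 / m ^ 2 := by ring
    _ ≤ (#s * δ) ^ 2 + 2 * ‖u‖ * ((∑ i ∈ s, ‖u i‖) * (#s * δ)) / m ^ 2 := by gcongr
    _ = _ := by ring

end L2

theorem exists_pos_mul_sq_add_mul_lt (a b : ℝ) {ε : ℝ} (hε : 0 < ε) :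
    ∃ δ > 0, a * δ ^ 2 + b * δ < ε := by
  have hlim : Filter.Tendsto (fun δ : ℝ => a * δ ^ 2 + b * δ) (nhdsWithin 0 (Set.Ioi 0))
      (nhds 0) := by
    have hcont : Continuous fun δ : ℝ => a * δ ^ 2 + b * δ := by fun_prop
    simpa using tendsto_nhdsWithin_of_tendsto_nhds (hcont.tendsto 0)
  obtain ⟨δ, hlt, hpos⟩ := ((hlim.eventually (gt_mem_nhds hε)).and self_mem_nhdsWithin).exists
  exact ⟨δ, hpos, hlt⟩

theorem wot_close_implies_adjoint_sot_close_of_norming_general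
    (M : ℕ) (B : L2 →L[ℂ] L2)
    (hVanish : ∀ x : L2, (∀ j : ℕ, j ≤ M → x j = 0) → B x = 0)
    (hBnorm : ‖B‖ = 1)
    (u : L2) (hupos : PosVec u)
    (husupp₁ : ∀ j : ℕ, M < j → u j = 0)
    (husupp₂ : ∀ j : ℕ, j ≤ M → u j ≠ 0)
    (hunorming : ‖(ContinuousLinearMap.adjoint B) u‖ = ‖ContinuousLinearMap.adjoint B‖ * ‖u‖) :
    ∀ ε > (0 : ℝ), ∃ δ > (0 : ℝ), ∀ T : L2 →L[ℂ] L2, T ∈ P1 →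
      (∀ k l : ℕ, k ≤ M → l ≤ M →
        ‖(inner ℂ (e k) ((T - B) (e l)) : ℂ)‖ < δ) →
      (∀ k : ℕ, k ≤ M → ‖(ContinuousLinearMap.adjoint (T - B)) (e k)‖ < ε) := by
  intro ε hε
  set s := Iic M
  have hB : ∀ j ∉ s, B (e j) = 0 := fun j hj =>
    hVanish _ fun i hi => by rw [L2.e_apply, if_neg (by grind)]
  have hBu : ‖adjoint B u‖ = ‖u‖ := by rw [hunorming, adjoint.norm_map, hBnorm, one_mul]
  have hu_supp : ∀ j ∉ s, u j = 0 := fun j hj => husupp₁ j (by simpa [s] using hj)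
  obtain ⟨k₀, hk₀, hmin⟩ := s.exists_min_image (‖u ·‖) ⟨0, by simp [s]⟩
  have hm : 0 < ‖u k₀‖ := norm_pos_iff.2 (husupp₂ k₀ (mem_Iic.1 hk₀))
  obtain ⟨δ, hδ, hlt⟩ := exists_pos_mul_sq_add_mul_lt ((#s : ℝ) ^ 2)
    (2 * ‖u‖ * (∑ i ∈ s, ‖u i‖) * #s / ‖u k₀‖ ^ 2) (pow_pos hε 2)
  refine ⟨δ, hδ, fun T hT hTB k hk => lt_of_pow_lt_pow_left₀ 2 hε.le ?_⟩
  have hTB' : ∀ k ∈ s, ∀ l ∈ s, ‖⟪e k, (T - B) (e l)⟫_ℂ‖ ≤ δ := fun k hk l hl =>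
    (hTB k l (mem_Iic.1 hk) (mem_Iic.1 hl)).le
  exact (L2.norm_adjoint_sub_e_sq_le s hT hB hBu hupos hu_supp hm hmin hTB'
    (mem_Iic.2 hk)).trans_lt hlt

/-- Let `M ≥ 0` and let `B` be a positive contraction on `ℓ₂` with
`B = P_M B P_M`.  Suppose that `‖B‖ = 1` and that `B*` has a positive norming vector
`u ∈ E_M` with `Supp(u) = {0, …, M}`.  Then for every `ε > 0` there exists `δ > 0` such
that for every positive contraction `T` on `ℓ₂`, if
`max_{0 ≤ k,l ≤ M} |⟨e_k, (T − B)e_l⟩| < δ` then `max_{0 ≤ k ≤ M} ‖(T − B)* e_k‖ < ε`. -/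
theorem wot_close_implies_adjoint_sot_close_of_norming
    (M : ℕ) (B : L2 →L[ℂ] L2) (hB : B ∈ P1)
    (hRange : ∀ x : L2, ∀ j : ℕ, M < j → (B x) j = 0)
    (hVanish : ∀ x : L2, (∀ j : ℕ, j ≤ M → x j = 0) → B x = 0)
    (hBnorm : ‖B‖ = 1)
    (u : L2) (hupos : PosVec u) (hune : u ≠ 0)
    (husupp₁ : ∀ j : ℕ, M < j → u j = 0)
    (husupp₂ : ∀ j : ℕ, j ≤ M → u j ≠ 0)
    (hunorming : ‖(ContinuousLinearMap.adjoint B) u‖ = ‖ContinuousLinearMap.adjoint B‖ * ‖u‖) :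
    ∀ ε > (0 : ℝ), ∃ δ > (0 : ℝ), ∀ T : L2 →L[ℂ] L2, T ∈ P1 →
      (∀ k l : ℕ, k ≤ M → l ≤ M →
        ‖(inner ℂ (e k) ((T - B) (e l)) : ℂ)‖ < δ) →
      (∀ k : ℕ, k ≤ M → ‖(ContinuousLinearMap.adjoint (T - B)) (e k)‖ < ε) :=
  wot_close_implies_adjoint_sot_close_of_norming_general M B hVanish hBnorm u hupos husupp₁ husupp₂
    hunorming
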